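/- With the same setup (Eve's states from a Pauli channel with error distribution $P$), for every $y \in \mathbb{F}_2^l$: $F\big({\cal E}_E(|y\rangle\langle y|),\; 2^{-l}\sum_{y'} {\cal E}_E(|y'\rangle\langle y'|)\big) \geq 1 - P_{ph}$. -/

import Mathlib

/-!
Averaging over `y` kills the off-diagonal entries of Eve's states, since
`∑_y (-1)^{z·y} (-1)^{z'·y} = 2^l [z = z']`, so the average state is `diag P`. Conjugating `ρ_y` by
`√(diag P)` gives `∑_x |u_x⟩⟨u_x|` with `u_x(x, z) = ±P(x, z)`; these vectors live on disjoint
fibres, hence are orthogonal, and for orthogonal vectors `√(∑_x |u_x⟩⟨u_x|) = ∑_x |u_x⟩⟨u_x| / ‖u_x‖`.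
The fidelity is therefore `∑_x ‖u_x‖ = ∑_x (∑_z P(x, z)²)^{1/2} ≥ ∑_x P(x, 0)`.
-/

open Matrix
open scoped ComplexOrder

open Classical in
/-- The positive-semidefinite square root of a matrix (junk value `0` off the PSD cone). -/
noncomputable def msqrt {ι : Type*} [Fintype ι] [DecidableEq ι]
    (A : Matrix ι ι ℂ) : Matrix ι ι ℂ :=
  if h : A.PosSemidef then
    (h.1.eigenvectorUnitary : Matrix ι ι ℂ) *
      diagonal ((↑) ∘ (fun x : ℝ => √x) ∘ h.1.eigenvalues) *
      (star (h.1.eigenvectorUnitary : Matrix ι ι ℂ))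
  else 0

/-- The Uhlmann fidelity `F(ρ, ρ') = Tr √(√ρ' ρ √ρ')`. -/
noncomputable def fidelity {ι : Type*} [Fintype ι] [DecidableEq ι]
    (ρ ρ' : Matrix ι ι ℂ) : ℝ :=
  ((msqrt (msqrt ρ' * ρ * msqrt ρ')).trace).re

/-- The marginal `P(x) = ∑ z P(x, z)`. -/
noncomputable def margP (l : ℕ)
    (P : (Fin l → ZMod 2) × (Fin l → ZMod 2) → ℝ) (x : Fin l → ZMod 2) : ℝ :=
  ∑ z, P (x, z)

/-- Eve's vector `|P,y,x⟩ = ∑ z (-1)^{z·y} √(P(z|x)) |(x,z)⟩`. -/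
noncomputable def eveKet (l : ℕ)
    (P : (Fin l → ZMod 2) × (Fin l → ZMod 2) → ℝ)
    (y x : Fin l → ZMod 2) :
    ((Fin l → ZMod 2) × (Fin l → ZMod 2)) → ℂ :=
  fun w =>
    if w.1 = x then
      (-1 : ℂ) ^ ((w.2 ⬝ᵥ y : ZMod 2)).val *
        (Real.sqrt (P (x, w.2) / margP l P x) : ℝ)
    else 0

/-- Eve's state `ρ_y = ∑ x P(x) |P,y,x⟩⟨P,y,x|` after Alice sends `|y⟩` in the `+`
basis through a Pauli channel with error distribution `P`. -/
noncomputable def eveState (l : ℕ)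
    (P : (Fin l → ZMod 2) × (Fin l → ZMod 2) → ℝ)
    (y : Fin l → ZMod 2) :
    Matrix ((Fin l → ZMod 2) × (Fin l → ZMod 2))
      ((Fin l → ZMod 2) × (Fin l → ZMod 2)) ℂ :=
  ∑ x, (margP l P x : ℂ) • Matrix.vecMulVec (eveKet l P y x) (star (eveKet l P y x))

open MatrixOrder in
lemma msqrt_eq_of_sq_eq {ι : Type*} [Fintype ι] [DecidableEq ι] {A B : Matrix ι ι ℂ}
    (hB : B.PosSemidef) (hBA : B ^ 2 = A) : msqrt A = B := by
  have hA : A.PosSemidef := hBA ▸ hB.pow 2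
  rw [msqrt, dif_pos hA]
  have h1 : (hA.1.eigenvectorUnitary : Matrix ι ι ℂ) *
      diagonal ((↑) ∘ (fun x : ℝ => √x) ∘ hA.1.eigenvalues) *
      (star (hA.1.eigenvectorUnitary : Matrix ι ι ℂ)) = cfc Real.sqrt A := by
    rw [hA.1.cfc_eq]; simp [Matrix.IsHermitian.cfc]
  rw [h1, ← cfcₙ_eq_cfc, ← CFC.sqrt_eq_real_sqrt A hA.nonneg, ← hBA, CFC.sqrt_sq B hB.nonneg]

lemma msqrt_diagonal_ofReal {ι : Type*} [Fintype ι] [DecidableEq ι] {d : ι → ℝ}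
    (hd : ∀ i, 0 ≤ d i) :
    msqrt (diagonal fun i => (d i : ℂ)) = diagonal fun i => (√(d i) : ℂ) := by
  refine msqrt_eq_of_sq_eq (.diagonal fun i => Complex.zero_le_real.mpr (Real.sqrt_nonneg _)) ?_
  simp only [sq, diagonal_mul_diagonal, ← Complex.ofReal_mul, Real.mul_self_sqrt (hd _)]

lemma mul_sum_vecMulVec_self_star_mul_conjTranspose {ι κ : Type*} [Fintype ι] [Fintype κ]
    (M : Matrix ι ι ℂ) (u : κ → ι → ℂ) :
    M * (∑ x, vecMulVec (u x) (star (u x))) * Mᴴ =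
      ∑ x, vecMulVec (M *ᵥ u x) (star (M *ᵥ u x)) := by
  simp [Finset.mul_sum, Finset.sum_mul, mul_vecMulVec, vecMulVec_mul, star_mulVec]

lemma trace_msqrt_sum_vecMulVec_of_pairwise_orthogonal {ι κ : Type*} [Fintype ι] [DecidableEq ι]
    [Fintype κ] (u : κ → ι → ℂ) (horth : Pairwise fun x x' => star (u x) ⬝ᵥ u x' = 0) :
    (msqrt (∑ x, vecMulVec (u x) (star (u x)))).trace =
      ∑ x, (√(∑ i, Complex.normSq (u x i)) : ℂ) := by
  set n : κ → ℝ := fun x => ∑ i, Complex.normSq (u x i) with hn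
  have hnorm x : star (u x) ⬝ᵥ u x = n x := by
    simp [hn, dotProduct, Complex.normSq_eq_conj_mul_self]
  have hzero x (h : n x = 0) : u x = 0 := by
    funext i
    exact Complex.normSq_eq_zero.mp <|
      (Finset.sum_eq_zero_iff_of_nonneg fun i _ => Complex.normSq_nonneg _).mp h i
        (Finset.mem_univ i)
  set B := ∑ x, ((√(n x))⁻¹ : ℂ) • vecMulVec (u x) (star (u x))
  have hB : B.PosSemidef := posSemidef_sum _ fun x _ =>
    (posSemidef_vecMulVec_self_star _).smul (by positivity)
  have hB2 : B ^ 2 = ∑ x, vecMulVec (u x) (star (u x)) := by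
    simp only [B, sq, Finset.sum_mul_sum, smul_mul_smul_comm, vecMulVec_mul_vecMulVec]
    refine Fintype.sum_congr _ _ fun x => ?_
    rw [Fintype.sum_eq_single x fun x' hx' => by simp [horth (Ne.symm hx')], hnorm,
      vecMulVec_smul, smul_smul]
    rcases eq_or_ne (n x) 0 with h | h
    · simp [hzero x h]
    · have hn0 : 0 < n x := (Finset.sum_nonneg fun i _ => Complex.normSq_nonneg _).lt_of_ne' h
      norm_cast
      rw [← mul_inv, Real.mul_self_sqrt hn0.le, inv_mul_cancel₀ h, one_smul]
  rw [msqrt_eq_of_sq_eq hB hB2]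
  simp only [B, trace_sum, trace_smul, trace_vecMulVec, dotProduct_comm _ (star _), hnorm,
    smul_eq_mul]
  refine Fintype.sum_congr _ _ fun x => ?_
  rw [← Complex.ofReal_inv, ← Complex.ofReal_mul, inv_mul_eq_div, Real.div_sqrt]

lemma neg_one_pow_val_add {R : Type*} [Ring R] (s t : ZMod 2) :
    (-1 : R) ^ (s + t).val = (-1) ^ s.val * (-1) ^ t.val := by
  rw [ZMod.val_add, ← neg_one_pow_eq_pow_mod_two, pow_add]

lemma sum_neg_one_pow_val_dotProduct {ι : Type*} [Fintype ι] [DecidableEq ι] (a : ι → ZMod 2) :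
    ∑ y : ι → ZMod 2, (-1 : ℂ) ^ (a ⬝ᵥ y).val = if a = 0 then 2 ^ Fintype.card ι else 0 := by
  split_ifs with ha
  · simp [ha]
  obtain ⟨i, hi⟩ := Function.ne_iff.mp ha
  have hai : a i = 1 := Fin.eq_one_of_ne_zero _ hi
  -- Translating by the `i`-th basis vector flips every sign.
  have hflip : ∑ y : ι → ZMod 2, (-1 : ℂ) ^ (a ⬝ᵥ y).val =
      -∑ y : ι → ZMod 2, (-1 : ℂ) ^ (a ⬝ᵥ y).val := by
    conv_lhs => rw [← Equiv.sum_comp (Equiv.addRight (Pi.single i 1))]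
    simp [dotProduct_add, hai, neg_one_pow_val_add, show (1 : ZMod 2).val = 1 from rfl]
  exact CharZero.eq_neg_self_iff.mp hflip

lemma sum_neg_one_pow_val_dotProduct_mul {ι : Type*} [Fintype ι] [DecidableEq ι]
    (a b : ι → ZMod 2) :
    ∑ y : ι → ZMod 2, (-1 : ℂ) ^ (a ⬝ᵥ y).val * (-1) ^ (b ⬝ᵥ y).val =
      if a = b then 2 ^ Fintype.card ι else 0 := by
  have hab : a + b = 0 ↔ a = b := by
    rw [add_eq_zero_iff_eq_neg, show -b = b from funext fun i => ZMod.neg_eq_self_mod_two _]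
  simp only [← neg_one_pow_val_add, ← add_dotProduct, sum_neg_one_pow_val_dotProduct, hab]

/-- The unnormalised vector `√P(x) |P,y,x⟩`. -/
noncomputable def weightedEveKet (l : ℕ) (P : (Fin l → ZMod 2) × (Fin l → ZMod 2) → ℝ)
    (y x : Fin l → ZMod 2) : (Fin l → ZMod 2) × (Fin l → ZMod 2) → ℂ :=
  fun w => if w.1 = x then (-1 : ℂ) ^ (w.2 ⬝ᵥ y).val * (√(P w) : ℂ) else 0

section EveState

variable {l : ℕ} {P : (Fin l → ZMod 2) × (Fin l → ZMod 2) → ℝ}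

lemma sqrt_margP_smul_eveKet (hP0 : ∀ w, 0 ≤ P w) (y x : Fin l → ZMod 2) :
    (√(margP l P x) : ℂ) • eveKet l P y x = weightedEveKet l P y x := by
  funext ⟨x', z⟩
  simp only [Pi.smul_apply, smul_eq_mul, eveKet, weightedEveKet]
  split_ifs with hx
  · subst hx
    have hsqrt : √(margP l P x') * √(P (x', z) / margP l P x') = √(P (x', z)) := by
      rcases eq_or_ne (margP l P x') 0 with hm | hm
      · have hPz : P (x', z) = 0 :=
          congrFun ((Fintype.sum_eq_zero_iff_of_nonneg fun z => hP0 _).mp hm) z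
        simp [hm, hPz]
      · have hm0 : 0 ≤ margP l P x' := Finset.sum_nonneg fun z _ => hP0 _
        rw [← Real.sqrt_mul hm0, mul_div_cancel₀ _ hm]
    rw [← hsqrt]
    push_cast
    ring
  · simp

lemma eveState_eq_sum_vecMulVec (hP0 : ∀ w, 0 ≤ P w) (y : Fin l → ZMod 2) :
    eveState l P y = ∑ x, vecMulVec (weightedEveKet l P y x) (star (weightedEveKet l P y x)) := by
  refine Fintype.sum_congr _ _ fun x => ?_
  have hm : 0 ≤ margP l P x := Finset.sum_nonneg fun z _ => hP0 _
  rw [← sqrt_margP_smul_eveKet hP0, star_smul, Complex.star_def, Complex.conj_ofReal,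
    smul_vecMulVec, vecMulVec_smul, smul_smul, ← Complex.ofReal_mul, Real.mul_self_sqrt hm]

lemma eveState_apply (hP0 : ∀ w, 0 ≤ P w) (y : Fin l → ZMod 2)
    (w w' : (Fin l → ZMod 2) × (Fin l → ZMod 2)) :
    eveState l P y w w' =
      if w.1 = w'.1 then
        (-1 : ℂ) ^ (w.2 ⬝ᵥ y).val * (-1) ^ (w'.2 ⬝ᵥ y).val * (√(P w) * √(P w') : ℝ)
      else 0 := by
  rw [eveState_eq_sum_vecMulVec hP0, Matrix.sum_apply]
  simp [weightedEveKet, vecMulVec_apply, eq_comm (a := w'.1)]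
  split_ifs <;> simp
  ring

lemma avg_eveState_eq_diagonal (hP0 : ∀ w, 0 ≤ P w) :
    ((2 : ℂ) ^ l)⁻¹ • ∑ y', eveState l P y' = diagonal fun w => (P w : ℂ) := by
  ext w w'
  simp only [Matrix.smul_apply, Matrix.sum_apply, eveState_apply hP0]
  by_cases h1 : w.1 = w'.1
  · simp only [h1, if_true, ← Finset.sum_mul, sum_neg_one_pow_val_dotProduct_mul, Fintype.card_fin,
      diagonal_apply, Prod.ext_iff, true_and]
    split_ifs with h2
    · rw [← Prod.ext h1 h2, Real.mul_self_sqrt (hP0 w), smul_eq_mul, inv_mul_cancel_left₀ (by simp)]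
    · simp
  · simp [h1, Prod.ext_iff]

lemma trace_msqrt_sqrt_mul_eveState_mul_sqrt (hP0 : ∀ w, 0 ≤ P w) (y : Fin l → ZMod 2) :
    (msqrt (diagonal (fun w => (√(P w) : ℂ)) * eveState l P y *
      diagonal (fun w => (√(P w) : ℂ)))).trace = ∑ x, (√(∑ z, P (x, z) ^ 2) : ℂ) := by
  set D := diagonal fun w => (√(P w) : ℂ)
  have hD : Dᴴ = D := by simp [D]
  have hv x : D *ᵥ weightedEveKet l P y x =
      fun w => if w.1 = x then (-1 : ℂ) ^ (w.2 ⬝ᵥ y).val * (P w : ℂ) else 0 := by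
    funext w
    simp only [D, mulVec_diagonal, weightedEveKet]
    split_ifs
    · rw [mul_left_comm, ← Complex.ofReal_mul, Real.mul_self_sqrt (hP0 w)]
    · rw [mul_zero]
  nth_rw 2 [← hD]
  rw [eveState_eq_sum_vecMulVec hP0, mul_sum_vecMulVec_self_star_mul_conjTranspose]
  simp only [hv]
  rw [trace_msqrt_sum_vecMulVec_of_pairwise_orthogonal]
  · refine Fintype.sum_congr _ _ fun x => ?_
    rw [Fintype.sum_prod_type, Fintype.sum_eq_single x fun x' hx' => by simp [hx']]
    simp [Complex.normSq_mul, sq]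
  · intro x x' hxx'
    refine Finset.sum_eq_zero fun w _ => ?_
    by_cases hw : w.1 = x <;> simp [hw, hxx']

end EveState

theorem fidelity_eveState_avg_ge_general (l : ℕ)
    (P : (Fin l → ZMod 2) × (Fin l → ZMod 2) → ℝ)
    (hP0 : ∀ w, 0 ≤ P w)
    (y : Fin l → ZMod 2) :
    fidelity (eveState l P y)
        ((((2 : ℂ) ^ l)⁻¹) • ∑ y', eveState l P y') ≥
      1 - (1 - ∑ x, P (x, 0)) := by
  rw [ge_iff_le, sub_sub_cancel, fidelity, avg_eveState_eq_diagonal hP0,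
    msqrt_diagonal_ofReal hP0, trace_msqrt_sqrt_mul_eveState_mul_sqrt hP0, ← Complex.ofReal_sum,
    Complex.ofReal_re]
  exact Finset.sum_le_sum fun x _ => (le_abs_self _).trans <| Real.abs_le_sqrt <|
    Finset.single_le_sum (f := fun z => P (x, z) ^ 2) (fun z _ => sq_nonneg _) (Finset.mem_univ 0)

/-- For every `y`, the fidelity between Eve's state `ρ_y` and the average state
`2^{-l} ∑_{y'} ρ_{y'}` is at least `1 - P_ph`, where `P_ph = 1 - ∑ x P(x, 0)`. -/
theorem fidelity_eveState_avg_ge (l : ℕ)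
    (P : (Fin l → ZMod 2) × (Fin l → ZMod 2) → ℝ)
    (hP0 : ∀ w, 0 ≤ P w) (hP1 : ∑ w, P w = 1)
    (y : Fin l → ZMod 2) :
    fidelity (eveState l P y)
        ((((2 : ℂ) ^ l)⁻¹) • ∑ y', eveState l P y') ≥
      1 - (1 - ∑ x, P (x, 0)) :=
  fidelity_eveState_avg_ge_general l P hP0 y
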